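/- arXiv:1702.07323 — 2 statements merged into one kernel-verified Lean document; each statement's English description precedes it below -/
import Mathlib

section
/- Let S ⊂ ℚ_p be measurable with μ(S) < ∞, m ∈ ℕ, L_m a set of coset representatives of ℚ_p/p^{-m}ℤ_p containing 0, and n > m an integer. Then Σ_{x ∈ L_m, |x|_p > p^n} ∬_{B(0,p^m) × B(x,p^m)} |(F 1_S)(z₁ − z₂)|² dμ(z₁) dμ(z₂) = p^m · ∫_{ℚ_p \ B(0,p^n)} |F 1_S|² dμ. -/
open MeasureTheory
open scoped ENNReal NNReal

noncomputable instance padicMS (p : ℕ) [Fact p.Prime] : MeasurableSpace ℚ_[p] := borel _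
instance padicBS (p : ℕ) [Fact p.Prime] : BorelSpace ℚ_[p] := ⟨rfl⟩

/-- The Haar measure on `ℚ_[p]`, normalized so that `ℤ_[p]` (the closed unit ball) has measure 1. -/
noncomputable def padicHaar (p : ℕ) [Fact p.Prime] : Measure ℚ_[p] :=
  Measure.addHaarMeasure
    ⟨⟨Metric.closedBall 0 1, isCompact_closedBall 0 1⟩,
      ⟨0, Metric.ball_subset_interior_closedBall (Metric.mem_ball_self one_pos)⟩⟩

/-- `χ` is the standard additive character `x ↦ exp(2πi·{x}_p)` of `ℚ_[p]`: whenever `r ∈ [0,1)`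
is a rational of the form `a/p^k` (i.e. `r ∈ ℤ[1/p]`) with `x - r ∈ ℤ_p`, then
`χ x = exp(2πi r)`.  (Such an `r` always exists and is unique, so this characterizes `χ`.) -/
def IsStdChar (p : ℕ) [Fact p.Prime] (χ : ℚ_[p] → ℂ) : Prop :=
  ∀ (x : ℚ_[p]) (r : ℚ), 0 ≤ r → r < 1 → (∃ (a : ℤ) (k : ℕ), r = (a : ℚ) / (p : ℚ) ^ k) →
    ‖x - (r : ℚ_[p])‖ ≤ 1 → χ x = Complex.exp (2 * Real.pi * Complex.I * (r : ℂ))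

section Aux

variable (p : ℕ) [Fact p.Prime]

instance padicHaar_isAddHaar : (padicHaar p).IsAddHaarMeasure :=
  Measure.isAddHaarMeasure_addHaarMeasure _

instance padicHaar_regular : (padicHaar p).Regular := Measure.regular_addHaarMeasure

lemma padicHaar_unitBall : padicHaar p (Metric.closedBall 0 1) = 1 :=
  Measure.addHaarMeasure_self

lemma padicHaar_translate (c : ℚ_[p]) (r : ℝ) :
    padicHaar p (Metric.closedBall c r) = padicHaar p (Metric.closedBall 0 r) := by
  have h : Metric.closedBall c r = (fun x => -c + x) ⁻¹' Metric.closedBall (0:ℚ_[p]) r := by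
    ext x
    simp [Metric.mem_closedBall, dist_eq_norm, neg_add_eq_sub]
  rw [h, measure_preimage_add]

lemma padic_cover (k : ℕ) (z : ℚ_[p]) (hz : ‖z‖ ≤ (p:ℝ)^(k:ℤ)) :
    ∃ a : Fin (p ^ k), ‖z - (a.1 : ℚ_[p]) * (p:ℚ_[p]) ^ (-(k:ℤ))‖ ≤ 1 := by
  have hpne : ((p:ℚ_[p])) ≠ 0 := Nat.cast_ne_zero.2 (Fact.out : p.Prime).ne_zero
  set y : ℚ_[p] := z * (p:ℚ_[p]) ^ (k:ℤ) with hy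
  have hyn : ‖y‖ ≤ 1 := by
    rw [hy, norm_mul, Padic.norm_p_zpow]
    calc ‖z‖ * (p:ℝ) ^ (-(k:ℤ)) ≤ (p:ℝ)^(k:ℤ) * (p:ℝ)^(-(k:ℤ)) := by
          apply mul_le_mul_of_nonneg_right hz (by positivity)
      _ = 1 := by
          rw [← zpow_add₀ (by exact_mod_cast (Fact.out : p.Prime).pos.ne')]
          simp
  set Y : ℤ_[p] := ⟨y, hyn⟩ with hY
  set a : ℕ := Y.appr k with ha
  have halt : a < p ^ k := Y.appr_lt k
  refine ⟨⟨a, halt⟩, ?_⟩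
  have hspec : ‖Y - (a : ℤ_[p])‖ ≤ (p:ℝ) ^ (-(k:ℤ)) := by
    rw [PadicInt.norm_le_pow_iff_mem_span_pow]
    exact PadicInt.appr_spec k Y
  have hq : ‖y - (a : ℚ_[p])‖ ≤ (p:ℝ) ^ (-(k:ℤ)) := by
    have : ((Y - (a:ℤ_[p]) : ℤ_[p]) : ℚ_[p]) = y - (a : ℚ_[p]) := by rw [PadicInt.coe_sub, PadicInt.coe_natCast]
    rw [← this]
    simpa [PadicInt.norm_def] using hspec
  have hzy : z - (a : ℚ_[p]) * (p:ℚ_[p]) ^ (-(k:ℤ)) = (y - (a:ℚ_[p])) * (p:ℚ_[p]) ^ (-(k:ℤ)) := by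
    rw [hy, sub_mul, mul_assoc, ← zpow_add₀ hpne]
    simp
  rw [hzy, norm_mul, Padic.norm_p_zpow, neg_neg]
  calc ‖y - (a:ℚ_[p])‖ * (p:ℝ)^(k:ℤ) ≤ (p:ℝ)^(-(k:ℤ)) * (p:ℝ)^(k:ℤ) := by
        apply mul_le_mul_of_nonneg_right hq (by positivity)
    _ = 1 := by
        rw [← zpow_add₀ (by exact_mod_cast (Fact.out : p.Prime).pos.ne' : (p:ℝ) ≠ 0)]
        simp

lemma padic_disj (k : ℕ) (a b : Fin (p^k)) (hab : a ≠ b) (z : ℚ_[p])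
    (hza : ‖z - (a.1 : ℚ_[p]) * (p:ℚ_[p]) ^ (-(k:ℤ))‖ ≤ 1)
    (hzb : ‖z - (b.1 : ℚ_[p]) * (p:ℚ_[p]) ^ (-(k:ℤ))‖ ≤ 1) : False := by
  set ca : ℚ_[p] := (a.1 : ℚ_[p]) * (p:ℚ_[p]) ^ (-(k:ℤ)) with hca
  set cb : ℚ_[p] := (b.1 : ℚ_[p]) * (p:ℚ_[p]) ^ (-(k:ℤ)) with hcb
  have h1 : ‖ca - cb‖ ≤ 1 := by
    have : ca - cb = (z - cb) - (z - ca) := by ring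
    rw [this]
    calc ‖(z - cb) - (z - ca)‖ ≤ max ‖z - cb‖ ‖z - ca‖ := by
          have hna := Padic.nonarchimedean (z - cb) (-(z - ca))
          rwa [norm_neg, (by ring : (z - cb) + -(z - ca) = (z - cb) - (z - ca))] at hna
      _ ≤ 1 := max_le hzb hza
  have h2 : ca - cb = (((a.1 : ℤ) - (b.1 : ℤ) : ℤ) : ℚ_[p]) * (p:ℚ_[p]) ^ (-(k:ℤ)) := by
    push_cast [hca, hcb]; ring
  rw [h2, norm_mul, Padic.norm_p_zpow, neg_neg] at h1
  have h3 : ‖(((a.1 : ℤ) - (b.1 : ℤ) : ℤ) : ℚ_[p])‖ ≤ (p:ℝ) ^ (-(k:ℤ)) := by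
    have hpos : (0:ℝ) < (p:ℝ)^(k:ℤ) := by
      have : (0:ℝ) < (p:ℝ) := by exact_mod_cast (Fact.out : p.Prime).pos
      positivity
    rw [← le_div_iff₀ hpos] at h1
    calc ‖(((a.1:ℤ) - b.1 : ℤ) : ℚ_[p])‖ ≤ 1 / (p:ℝ)^(k:ℤ) := h1
      _ = (p:ℝ)^(-(k:ℤ)) := by rw [one_div, ← zpow_neg]
  have hdvd : (p:ℤ)^k ∣ ((a.1:ℤ) - b.1) := by
    rw [← Padic.norm_int_le_pow_iff_dvd]
    exact_mod_cast h3
  have : ((a.1:ℤ) - b.1) = 0 := by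
    apply Int.eq_zero_of_abs_lt_dvd hdvd
    have h4 : (a.1:ℤ) < (p:ℤ)^k := by exact_mod_cast a.2
    have h5 : (b.1:ℤ) < (p:ℤ)^k := by exact_mod_cast b.2
    have h6 : (0:ℤ) ≤ (a.1:ℤ) := Int.natCast_nonneg _
    have h7 : (0:ℤ) ≤ (b.1:ℤ) := Int.natCast_nonneg _
    rw [abs_sub_lt_iff]; omega
  apply hab
  apply Fin.ext
  omega

lemma padicHaar_closedBall (k : ℕ) (c : ℚ_[p]) :
    padicHaar p (Metric.closedBall c ((p:ℝ) ^ (k:ℤ))) = (p : ℝ≥0∞) ^ (k:ℤ) := by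
  rw [padicHaar_translate]
  set f : Fin (p ^ k) → Set ℚ_[p] := fun a =>
    Metric.closedBall ((a.1 : ℚ_[p]) * (p:ℚ_[p]) ^ (-(k:ℤ))) 1 with hf
  have hmeas : ∀ a, MeasurableSet (f a) := fun a => measurableSet_closedBall
  have hdisj : Pairwise (Function.onFun Disjoint f) := by
    intro a b hab
    simp only [Function.onFun, hf]
    rw [Set.disjoint_left]
    intro z hza hzb
    exact padic_disj p k a b hab z
      (by simpa [Metric.mem_closedBall, dist_eq_norm] using hza)
      (by simpa [Metric.mem_closedBall, dist_eq_norm] using hzb)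
  have hunion : ⋃ a, f a = Metric.closedBall (0:ℚ_[p]) ((p:ℝ) ^ (k:ℤ)) := by
    apply Set.eq_of_subset_of_subset
    · intro z hz
      obtain ⟨a, hza⟩ := Set.mem_iUnion.1 hz
      rw [hf] at hza
      simp only [Metric.mem_closedBall, dist_eq_norm] at hza ⊢
      rw [sub_zero]
      have h1 : ‖(a.1 : ℚ_[p]) * (p:ℚ_[p]) ^ (-(k:ℤ))‖ ≤ (p:ℝ)^(k:ℤ) := by
        rw [norm_mul, Padic.norm_p_zpow, neg_neg]
        have : ‖((a.1:ℕ) : ℚ_[p])‖ ≤ 1 := Padic.norm_int_le_one (a.1 : ℤ) |>.trans le_rfl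
          |> fun h => by exact_mod_cast h
        calc ‖((a.1:ℕ) : ℚ_[p])‖ * (p:ℝ)^(k:ℤ) ≤ 1 * (p:ℝ)^(k:ℤ) :=
              mul_le_mul_of_nonneg_right this (by positivity)
          _ = (p:ℝ)^(k:ℤ) := one_mul _
      have hone : (1:ℝ) ≤ (p:ℝ)^(k:ℤ) :=
        one_le_zpow₀ (by exact_mod_cast (Fact.out : p.Prime).one_lt.le) (by positivity)
      have : z = (z - (a.1 : ℚ_[p]) * (p:ℚ_[p]) ^ (-(k:ℤ))) + (a.1 : ℚ_[p]) * (p:ℚ_[p]) ^ (-(k:ℤ)) := by ring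
      rw [this]
      calc ‖_ + _‖ ≤ max ‖z - (a.1 : ℚ_[p]) * (p:ℚ_[p]) ^ (-(k:ℤ))‖ ‖(a.1 : ℚ_[p]) * (p:ℚ_[p]) ^ (-(k:ℤ))‖ :=
            Padic.nonarchimedean _ _
        _ ≤ (p:ℝ)^(k:ℤ) := max_le (hza.trans hone) h1
    · intro z hz
      simp only [Metric.mem_closedBall, dist_eq_norm, sub_zero] at hz
      obtain ⟨a, hza⟩ := padic_cover p k z hz
      exact Set.mem_iUnion.2 ⟨a, by simpa [hf, Metric.mem_closedBall, dist_eq_norm] using hza⟩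
  rw [← hunion, measure_iUnion hdisj hmeas]
  have hval : ∀ a, padicHaar p (f a) = 1 := fun a => by
    rw [hf]
    simpa using (padicHaar_translate p ((a.1 : ℚ_[p]) * (p:ℚ_[p]) ^ (-(k:ℤ))) 1).trans
      (padicHaar_unitBall p)
  simp only [hval, tsum_const]
  rw [tsum_fintype, Finset.sum_const, Finset.card_univ, Fintype.card_fin, nsmul_eq_mul,
    mul_one, Nat.cast_pow, zpow_natCast]

lemma setLIntegral_equiv {α : Type*} [MeasurableSpace α] (μ : Measure α) (e : α ≃ᵐ α)
    (hμ : Measure.map e μ = μ) {s : Set α} (hs : MeasurableSet s) (g : α → ℝ≥0∞) :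
    ∫⁻ z in s, g z ∂μ = ∫⁻ u in e ⁻¹' s, g (e u) ∂μ := by
  conv_lhs => rw [← hμ]
  rw [Measure.restrict_map e.measurable hs]
  exact lintegral_map_equiv g e

end Aux

/-- For `n > m`, the sum over `x ∈ L_m` with `|x| > p^n` of
`∬_{B(0,p^m)×B(x,p^m)} |𝓕 1_S(z₁-z₂)|² dμ dμ` equals
`p^m · ∫_{ℚ_p \ B(0,p^n)} |𝓕 1_S|² dμ`. -/
theorem stmt11 (p : ℕ) [Fact p.Prime] (χ : ℚ_[p] → ℂ) (hχ : IsStdChar p χ)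
    (S : Set ℚ_[p]) (hSm : MeasurableSet S) (hfin : padicHaar p S < ⊤)
    (m : ℕ) (L : Set ℚ_[p]) (h0L : (0 : ℚ_[p]) ∈ L)
    (hL : ∀ z : ℚ_[p], ∃! x, x ∈ L ∧ ‖z - x‖ ≤ (p : ℝ) ^ (m : ℤ))
    (n : ℤ) (hn : (m : ℤ) < n) :
    ∑' x : {x : ℚ_[p] // x ∈ L ∧ (p : ℝ) ^ n < ‖x‖},
        ∫⁻ z₁ in Metric.closedBall (0 : ℚ_[p]) ((p : ℝ) ^ (m : ℤ)),
          ∫⁻ z₂ in Metric.closedBall (x : ℚ_[p]) ((p : ℝ) ^ (m : ℤ)),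
            ((‖∫ w in S, χ (w * (z₁ - z₂)) ∂(padicHaar p)‖₊ : ℝ≥0∞)) ^ 2
              ∂(padicHaar p) ∂(padicHaar p)
      = (p : ℝ≥0∞) ^ (m : ℤ) *
          ∫⁻ ξ in (Metric.closedBall (0 : ℚ_[p]) ((p : ℝ) ^ n))ᶜ,
            ((‖∫ w in S, χ (w * ξ) ∂(padicHaar p)‖₊ : ℝ≥0∞)) ^ 2 ∂(padicHaar p) := by
  classical
  set μ := padicHaar p with hμdef
  set g : ℚ_[p] → ℝ≥0∞ := fun ξ => ((‖∫ w in S, χ (w * ξ) ∂μ‖₊ : ℝ≥0∞)) ^ 2 with hg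
  have hp1 : (1:ℝ) < (p:ℝ) := by exact_mod_cast (Fact.out : p.Prime).one_lt
  have hmn : ((p:ℝ)) ^ (m:ℤ) < (p:ℝ) ^ n := zpow_lt_zpow_right₀ hp1 hn
  set T := {x : ℚ_[p] // x ∈ L ∧ (p : ℝ) ^ n < ‖x‖} with hT
  set A : T → Set ℚ_[p] := fun x => Metric.closedBall (x : ℚ_[p]) ((p:ℝ) ^ (m:ℤ)) with hA
  have hAmeas : ∀ x, MeasurableSet (A x) := fun x => measurableSet_closedBall
  have hAdisj : Pairwise (Function.onFun Disjoint A) := by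
    intro x y hxy
    simp only [Function.onFun, hA]
    rw [Set.disjoint_left]
    intro z hzx hzy
    simp only [Metric.mem_closedBall, dist_eq_norm] at hzx hzy
    have hu := (hL z).unique ⟨x.2.1, hzx⟩ ⟨y.2.1, hzy⟩
    exact hxy (Subtype.ext hu)
  have hAunion : ⋃ x, A x = (Metric.closedBall (0:ℚ_[p]) ((p:ℝ) ^ n))ᶜ := by
    apply Set.eq_of_subset_of_subset
    · intro z hz
      obtain ⟨x, hzx⟩ := Set.mem_iUnion.1 hz
      simp only [hA, Metric.mem_closedBall, dist_eq_norm] at hzx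
      simp only [Set.mem_compl_iff, Metric.mem_closedBall, dist_eq_norm, sub_zero, not_le]
      have hlt : ‖z - (x:ℚ_[p])‖ < ‖(x:ℚ_[p])‖ := lt_of_le_of_lt hzx (hmn.trans x.2.2)
      have : ‖z‖ = ‖(x:ℚ_[p])‖ := by
        have h := Padic.add_eq_max_of_ne (p := p) (q := (x:ℚ_[p])) (r := z - x)
          (ne_of_gt hlt)
        rw [(by ring : (x:ℚ_[p]) + (z - x) = z)] at h
        rw [h, max_eq_left hlt.le]
      rw [this]; exact x.2.2
    · intro z hz
      simp only [Set.mem_compl_iff, Metric.mem_closedBall, dist_eq_norm, sub_zero, not_le] at hz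
      obtain ⟨x, ⟨hxL, hxz⟩, -⟩ := hL z
      have hlt : ‖x - z‖ < ‖z‖ := by
        rw [← norm_neg, (by ring : -(x - z) = z - x)]
        exact lt_of_le_of_lt hxz (hmn.trans hz)
      have hnx : ‖x‖ = ‖z‖ := by
        have h := Padic.add_eq_max_of_ne (p := p) (q := z) (r := x - z) (ne_of_gt hlt)
        rw [(by ring : z + (x - z) = x)] at h
        rw [h, max_eq_left hlt.le]
      refine Set.mem_iUnion.2 ⟨⟨x, hxL, by rw [hnx]; exact hz⟩, ?_⟩
      simp only [hA, Metric.mem_closedBall, dist_eq_norm]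
      rw [← norm_neg, (by ring : -(z - x) = x - z)] at hxz ⊢
      exact hxz
  have hppos : (0:ℝ≥0∞) < (p:ℝ≥0∞) ^ (m:ℤ) := by
    apply ENNReal.zpow_pos (by exact_mod_cast (Fact.out : p.Prime).pos.ne') (by simp)
  haveI : Countable T := by
    have hc := Measure.countable_meas_pos_of_disjoint_iUnion (μ := μ) hAmeas hAdisj
    have : {i : T | 0 < μ (A i)} = Set.univ := by
      apply Set.eq_univ_of_forall
      intro x
      simp only [Set.mem_setOf_eq, hA, hμdef]
      rw [padicHaar_closedBall]
      exact hppos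
    rw [this, Set.countable_univ_iff] at hc
    exact hc
  -- the inner double integral
  have hinner : ∀ x : T,
      (∫⁻ z₁ in Metric.closedBall (0 : ℚ_[p]) ((p : ℝ) ^ (m : ℤ)),
        ∫⁻ z₂ in A x, g (z₁ - z₂) ∂μ ∂μ)
      = (p : ℝ≥0∞) ^ (m:ℤ) * ∫⁻ u in A x, g (-u) ∂μ := by
    intro x
    have key : ∀ z₁ ∈ Metric.closedBall (0 : ℚ_[p]) ((p : ℝ) ^ (m : ℤ)),
        ∫⁻ z₂ in A x, g (z₁ - z₂) ∂μ = ∫⁻ u in A x, g (-u) ∂μ := by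
      intro z₁ hz₁
      simp only [Metric.mem_closedBall, dist_eq_norm, sub_zero] at hz₁
      have hmap : Measure.map (MeasurableEquiv.addRight z₁) μ = μ := by
        simpa using map_add_right_eq_self μ z₁
      rw [setLIntegral_equiv μ (MeasurableEquiv.addRight z₁) hmap (hAmeas x)
        (fun z₂ => g (z₁ - z₂))]
      have hpre : (MeasurableEquiv.addRight z₁) ⁻¹' (A x) = A x := by
        ext u
        simp only [Set.mem_preimage, MeasurableEquiv.coe_addRight, hA,
          Metric.mem_closedBall, dist_eq_norm]
        constructor
        · intro h
          have : u - (x:ℚ_[p]) = (u + z₁ - x) + (-z₁) := by ring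
          rw [this]
          refine (Padic.nonarchimedean _ _).trans (max_le h (by rwa [norm_neg]))
        · intro h
          have : u + z₁ - (x:ℚ_[p]) = (u - x) + z₁ := by ring
          rw [this]
          exact (Padic.nonarchimedean _ _).trans (max_le h hz₁)
      rw [hpre]
      apply lintegral_congr_ae
      apply Filter.Eventually.of_forall
      intro u
      simp only [MeasurableEquiv.coe_addRight]
      congr 1
      ring
    calc (∫⁻ z₁ in Metric.closedBall (0 : ℚ_[p]) ((p : ℝ) ^ (m : ℤ)),
            ∫⁻ z₂ in A x, g (z₁ - z₂) ∂μ ∂μ)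
        = ∫⁻ _ in Metric.closedBall (0 : ℚ_[p]) ((p : ℝ) ^ (m : ℤ)),
            (∫⁻ u in A x, g (-u) ∂μ) ∂μ := by
          apply lintegral_congr_ae
          exact (ae_restrict_iff' measurableSet_closedBall).2 (Filter.Eventually.of_forall key)
      _ = (∫⁻ u in A x, g (-u) ∂μ) * μ (Metric.closedBall (0 : ℚ_[p]) ((p : ℝ) ^ (m : ℤ))) :=
          setLIntegral_const _ _
      _ = (p : ℝ≥0∞) ^ (m:ℤ) * ∫⁻ u in A x, g (-u) ∂μ := by
          rw [hμdef, padicHaar_closedBall, mul_comm]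
  calc ∑' x : T, ∫⁻ z₁ in Metric.closedBall (0 : ℚ_[p]) ((p : ℝ) ^ (m : ℤ)),
          ∫⁻ z₂ in A x, g (z₁ - z₂) ∂μ ∂μ
      = ∑' x : T, (p : ℝ≥0∞) ^ (m:ℤ) * ∫⁻ u in A x, g (-u) ∂μ := by
        exact tsum_congr hinner
    _ = (p : ℝ≥0∞) ^ (m:ℤ) * ∑' x : T, ∫⁻ u in A x, g (-u) ∂μ := ENNReal.tsum_mul_left
    _ = (p : ℝ≥0∞) ^ (m:ℤ) * ∫⁻ u in ⋃ x, A x, g (-u) ∂μ := by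
        rw [lintegral_iUnion hAmeas hAdisj]
    _ = (p : ℝ≥0∞) ^ (m:ℤ) * ∫⁻ u in (Metric.closedBall (0:ℚ_[p]) ((p:ℝ) ^ n))ᶜ, g (-u) ∂μ := by
        rw [hAunion]
    _ = (p : ℝ≥0∞) ^ (m:ℤ) * ∫⁻ ξ in (Metric.closedBall (0:ℚ_[p]) ((p:ℝ) ^ n))ᶜ, g ξ ∂μ := by
        congr 1
        have hmapneg : Measure.map (MeasurableEquiv.neg ℚ_[p]) μ = μ := by
          simpa using Measure.map_neg_eq_self μ
        rw [setLIntegral_equiv μ (MeasurableEquiv.neg ℚ_[p]) hmapneg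
          (measurableSet_closedBall.compl) g]
        have hpre : (MeasurableEquiv.neg ℚ_[p]) ⁻¹' (Metric.closedBall (0:ℚ_[p]) ((p:ℝ) ^ n))ᶜ
            = (Metric.closedBall (0:ℚ_[p]) ((p:ℝ) ^ n))ᶜ := by
          ext u
          simp [Metric.mem_closedBall, dist_eq_norm]
        rw [hpre]
        apply lintegral_congr_ae
        apply Filter.Eventually.of_forall
        intro u
        simp
end

section
/- Let S be a disjoint union of closed balls B(x_k, p^{-n_k}) in ℚ_p and let y ∈ ℚ_p with |y|_p = p^{-l}. Then μ(S \ (S + y)) ≤ Σ_{a = l+1}^∞ m_a · p^{-a}, where m_a = #{k : n_k = a}. -/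
open MeasureTheory
open scoped ENNReal NNReal
open scoped Pointwise

instance padicHaar_inv (p : ℕ) [Fact p.Prime] : (padicHaar p).IsAddLeftInvariant := by
  unfold padicHaar; infer_instance

instance padicHaar_reg (p : ℕ) [Fact p.Prime] : (padicHaar p).Regular := by
  unfold padicHaar; infer_instance

section aux
variable (p : ℕ) [hp : Fact p.Prime]

lemma padicHaar_closedBall_eq (x : ℚ_[p]) (r : ℝ) :
    padicHaar p (Metric.closedBall x r) = padicHaar p (Metric.closedBall 0 r) := by
  rw [← vadd_closedBall_zero, measure_vadd]

lemma ball_decomp (n : ℤ) :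
    Metric.closedBall (0:ℚ_[p]) ((p:ℝ)^(-n)) =
      ⋃ c : Fin p, Metric.closedBall (((c:ℕ) : ℚ_[p]) * (p:ℚ_[p])^n) ((p:ℝ)^(-(n+1))) := by
  have hp0 : (p:ℚ_[p]) ≠ 0 := Nat.cast_ne_zero.2 hp.out.ne_zero
  ext z
  simp only [Metric.mem_closedBall, dist_eq_norm, Set.mem_iUnion, sub_zero]
  constructor
  · intro hz
    set w : ℚ_[p] := z * (p:ℚ_[p])^(-n) with hw
    have hwnorm : ‖w‖ ≤ 1 := by
      rw [hw, norm_mul, Padic.norm_p_zpow, neg_neg]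
      calc ‖z‖ * (p:ℝ)^n ≤ (p:ℝ)^(-n) * (p:ℝ)^n := by
            apply mul_le_mul_of_nonneg_right hz (zpow_nonneg (by positivity) _)
        _ = 1 := by
            rw [← zpow_add₀ (by exact_mod_cast hp.out.pos.ne') (-n) n]; simp
    set W : ℤ_[p] := ⟨w, hwnorm⟩ with hW
    refine ⟨⟨W.appr 1, by simpa using W.appr_lt 1⟩, ?_⟩
    have hspec : ‖W - (W.appr 1 : ℤ_[p])‖ ≤ (p:ℝ)^(-(1:ℕ):ℤ) :=
      (PadicInt.norm_le_pow_iff_mem_span_pow _ 1).2 (by simpa using W.appr_spec 1)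
    have hspec' : ‖w - (W.appr 1 : ℚ_[p])‖ ≤ (p:ℝ)^(-1:ℤ) := by
      have : ((W - (W.appr 1 : ℤ_[p]) : ℤ_[p]) : ℚ_[p]) = w - (W.appr 1 : ℚ_[p]) := by
        rfl
      rw [← this]; simpa [PadicInt.norm_def] using hspec
    have hz' : z = w * (p:ℚ_[p])^n := by
      rw [hw, mul_assoc, ← zpow_add₀ hp0]; simp
    have : z - (W.appr 1 : ℚ_[p]) * (p:ℚ_[p])^n = (w - (W.appr 1 : ℚ_[p])) * (p:ℚ_[p])^n := by
      rw [hz']; ring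
    rw [this, norm_mul, Padic.norm_p_zpow]
    calc ‖w - (W.appr 1 : ℚ_[p])‖ * (p:ℝ)^(-n) ≤ (p:ℝ)^(-1:ℤ) * (p:ℝ)^(-n) :=
          mul_le_mul_of_nonneg_right hspec' (zpow_nonneg (by positivity) _)
      _ = (p:ℝ)^(-(n+1)) := by
          rw [← zpow_add₀ (by exact_mod_cast hp.out.pos.ne' : (p:ℝ) ≠ 0)]; ring_nf
  · rintro ⟨c, hc⟩
    have h1 : ‖((c:ℕ) : ℚ_[p]) * (p:ℚ_[p])^n‖ ≤ (p:ℝ)^(-n) := by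
      rw [norm_mul, Padic.norm_p_zpow]
      calc ‖((c:ℕ) : ℚ_[p])‖ * (p:ℝ)^(-n) ≤ 1 * (p:ℝ)^(-n) := by
            apply mul_le_mul_of_nonneg_right _ (zpow_nonneg (by positivity) _)
            exact_mod_cast Padic.norm_int_le_one ((c:ℕ) : ℤ)
        _ = (p:ℝ)^(-n) := one_mul _
    have h2 : (p:ℝ)^(-(n+1)) ≤ (p:ℝ)^(-n) := by
      apply zpow_le_zpow_right₀ (by exact_mod_cast hp.out.one_lt.le) (by omega)
    calc ‖z‖ = ‖(z - ((c:ℕ) : ℚ_[p]) * (p:ℚ_[p])^n) + ((c:ℕ) : ℚ_[p]) * (p:ℚ_[p])^n‖ := by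
          rw [sub_add_cancel]
      _ ≤ max ‖z - ((c:ℕ) : ℚ_[p]) * (p:ℚ_[p])^n‖ ‖((c:ℕ) : ℚ_[p]) * (p:ℚ_[p])^n‖ :=
          Padic.nonarchimedean _ _
      _ ≤ (p:ℝ)^(-n) := max_le (le_trans hc h2) h1

set_option maxHeartbeats 1000000 in
lemma ball_decomp_disjoint (n : ℤ) :
    Pairwise (Function.onFun Disjoint fun c : Fin p =>
      Metric.closedBall (((c:ℕ) : ℚ_[p]) * (p:ℚ_[p])^n) ((p:ℝ)^(-(n+1)))) := by
  intro c c' hne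
  rw [Function.onFun, Set.disjoint_left]
  intro z hz hz'
  simp only [Metric.mem_closedBall, dist_eq_norm] at hz hz'
  have key : ‖((c:ℕ) : ℚ_[p]) * (p:ℚ_[p])^n - ((c':ℕ) : ℚ_[p]) * (p:ℚ_[p])^n‖ ≤ (p:ℝ)^(-(n+1)) := by
    calc ‖((c:ℕ) : ℚ_[p]) * (p:ℚ_[p])^n - ((c':ℕ) : ℚ_[p]) * (p:ℚ_[p])^n‖
        = ‖(((c:ℕ) : ℚ_[p]) * (p:ℚ_[p])^n - z) + (z - ((c':ℕ) : ℚ_[p]) * (p:ℚ_[p])^n)‖ := by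
          rw [sub_add_sub_cancel]
      _ ≤ max ‖((c:ℕ) : ℚ_[p]) * (p:ℚ_[p])^n - z‖ ‖z - ((c':ℕ) : ℚ_[p]) * (p:ℚ_[p])^n‖ :=
          Padic.nonarchimedean _ _
      _ ≤ (p:ℝ)^(-(n+1)) := by
          rw [max_le_iff]; constructor
          · rw [← norm_neg]; simpa [neg_sub] using hz
          · exact hz'
  set d : ℤ := ((c:ℕ):ℤ) - ((c':ℕ):ℤ) with hd
  have hcc : ‖((d : ℤ) : ℚ_[p])‖ = 1 := by
    apply le_antisymm (Padic.norm_int_le_one _)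
    by_contra h
    push_neg at h
    have hdvd := Padic.norm_intCast_lt_one_iff.1 h
    have hlt : d ≠ 0 := by
      rw [hd]; intro h0; apply hne; apply Fin.ext; omega
    have habs : d.natAbs < p := by
      rw [hd]; have := c.2; have := c'.2; omega
    have hpos : 0 < d.natAbs := Int.natAbs_pos.2 hlt
    have := Nat.le_of_dvd hpos (by simpa using Int.natAbs_dvd_natAbs.2 hdvd)
    omega
  have key2 : ‖((c:ℕ) : ℚ_[p]) * (p:ℚ_[p])^n - ((c':ℕ) : ℚ_[p]) * (p:ℚ_[p])^n‖ = (p:ℝ)^(-n) := by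
    have : ((c:ℕ) : ℚ_[p]) * (p:ℚ_[p])^n - ((c':ℕ) : ℚ_[p]) * (p:ℚ_[p])^n
        = ((d : ℤ) : ℚ_[p]) * (p:ℚ_[p])^n := by rw [hd]; push_cast; ring
    rw [this, norm_mul, Padic.norm_p_zpow, hcc, one_mul]
  rw [key2] at key
  have : (p:ℝ)^(-(n+1)) < (p:ℝ)^(-n) := by
    apply zpow_lt_zpow_right₀ (by exact_mod_cast hp.out.one_lt) (by omega)
  linarith

lemma padicHaar_ball (n : ℤ) :
    padicHaar p (Metric.closedBall (0:ℚ_[p]) ((p:ℝ)^(-n))) = (p:ℝ≥0∞)^(-n) := by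
  have hp0 : (p:ℝ≥0∞) ≠ 0 := by exact_mod_cast hp.out.pos.ne'
  have hpt : (p:ℝ≥0∞) ≠ ⊤ := ENNReal.natCast_ne_top p
  set g : ℤ → ℝ≥0∞ := fun n => padicHaar p (Metric.closedBall (0:ℚ_[p]) ((p:ℝ)^(-n))) with hg
  have hrec : ∀ m : ℤ, g m = p * g (m+1) := by
    intro m
    rw [hg]
    simp only
    rw [ball_decomp p m,
      measure_iUnion (ball_decomp_disjoint p m) (fun c => measurableSet_closedBall)]
    have : ∀ c : Fin p,
        padicHaar p (Metric.closedBall (((c:ℕ) : ℚ_[p]) * (p:ℚ_[p])^m) ((p:ℝ)^(-(m+1))))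
          = padicHaar p (Metric.closedBall (0:ℚ_[p]) ((p:ℝ)^(-(m+1)))) :=
      fun c => padicHaar_closedBall_eq p _ _
    rw [tsum_fintype]
    simp only [this]
    rw [Finset.sum_const, Finset.card_univ, Fintype.card_fin, nsmul_eq_mul]
  have key : ∀ m : ℤ, g m = (p:ℝ≥0∞)^(-m) := by
    intro m
    induction m using Int.induction_on with
    | zero =>
      rw [hg]; simp only [neg_zero, zpow_zero]
      exact Measure.addHaarMeasure_self
    | succ k ih =>
      have h1 : (p:ℝ≥0∞) * g (k+1) = (p:ℝ≥0∞)^(-(k:ℤ)) := by rw [← hrec]; exact_mod_cast ih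
      have h2 : (p:ℝ≥0∞) * (p:ℝ≥0∞)^(-((k:ℤ)+1)) = (p:ℝ≥0∞)^(-(k:ℤ)) := by
        rw [show (-(k:ℤ)) = 1 + -((k:ℤ)+1) by ring, ENNReal.zpow_add hp0 hpt, zpow_one]
      have := (ENNReal.mul_right_inj hp0 hpt).1 (h1.trans h2.symm)
      exact_mod_cast this
    | pred k ih =>
      have h1 : g (-(k:ℤ) - 1) = p * g (-(k:ℤ)) := by
        have := hrec (-(k:ℤ) - 1); simpa using this
      rw [show (-(k:ℤ)-1 : ℤ) = -((k:ℤ)+1) by ring] at h1 ⊢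
      rw [h1, ih, show (- -((k:ℤ)+1)) = 1 + - -(k:ℤ) by ring, ENNReal.zpow_add hp0 hpt, zpow_one]
  exact key n

end aux

def sigEquiv {ι : Type*} (l : ℤ) (nk : ι → ℤ) : {k : ι // l + 1 ≤ nk k} ≃
    Σ a : {a : ℤ // l + 1 ≤ a}, {k : ι // nk k = (a:ℤ)} :=
  { toFun := fun k => ⟨⟨nk k.1, k.2⟩, ⟨k.1, rfl⟩⟩
    invFun := fun q => ⟨q.2.1, by rw [q.2.2]; exact q.1.2⟩
    left_inv := fun k => rfl
    right_inv := fun q => by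
      obtain ⟨⟨a, ha⟩, ⟨k, hk⟩⟩ := q
      have hk' : nk k = a := hk
      subst hk'
      rfl }

/-- If `S` is a disjoint union of closed balls `B(x_k, p^{-n_k})` and `|y| = p^{-l}`, then
`μ(S \ (S+y)) ≤ Σ_{a ≥ l+1} m_a p^{-a}` where `m_a = #{k : n_k = a}`. -/
theorem stmt14 (p : ℕ) [Fact p.Prime] (ι : Type*) [Countable ι]
    (x : ι → ℚ_[p]) (nk : ι → ℤ) (S : Set ℚ_[p])
    (hdecomp : S = ⋃ k, Metric.closedBall (x k) ((p : ℝ) ^ (-nk k)))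
    (hdisj : Pairwise (Function.onFun Disjoint fun k => Metric.closedBall (x k) ((p : ℝ) ^ (-nk k))))
    (y : ℚ_[p]) (l : ℤ) (hy : ‖y‖ = (p : ℝ) ^ (-l)) :
    padicHaar p (S \ {z : ℚ_[p] | z - y ∈ S})
      ≤ ∑' a : {a : ℤ // l + 1 ≤ a},
          ({k | nk k = (a : ℤ)}.encard : ℝ≥0∞) * (p : ℝ≥0∞) ^ (-(a : ℤ)) := by
  classical
  have hplt : (1:ℝ) < p := by exact_mod_cast (Fact.out : p.Prime).one_lt
  have hsub : S \ {z : ℚ_[p] | z - y ∈ S} ⊆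
      ⋃ k : {k : ι // l + 1 ≤ nk k}, Metric.closedBall (x k) ((p:ℝ)^(-nk (k:ι))) := by
    rintro z ⟨hzS, hzT⟩
    rw [hdecomp] at hzS
    obtain ⟨k, hk⟩ := Set.mem_iUnion.1 hzS
    by_cases hkl : l + 1 ≤ nk k
    · exact Set.mem_iUnion.2 ⟨⟨k, hkl⟩, hk⟩
    · exfalso
      apply hzT
      push_neg at hkl
      have hmem : z - y ∈ Metric.closedBall (x k) ((p:ℝ)^(-nk k)) := by
        rw [Metric.mem_closedBall, dist_eq_norm]
        have heq : z - y - x k = (z - x k) + (-y) := by ring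
        rw [heq]
        refine le_trans (Padic.nonarchimedean _ _) (max_le ?_ ?_)
        · rw [← dist_eq_norm]; exact hk
        · rw [norm_neg, hy]
          exact zpow_le_zpow_right₀ hplt.le (by omega)
      show z - y ∈ S
      rw [hdecomp]
      exact Set.mem_iUnion.2 ⟨k, hmem⟩
  calc padicHaar p (S \ {z : ℚ_[p] | z - y ∈ S})
      ≤ padicHaar p (⋃ k : {k : ι // l + 1 ≤ nk k},
          Metric.closedBall (x k) ((p:ℝ)^(-nk (k:ι)))) := measure_mono hsub
    _ ≤ ∑' k : {k : ι // l + 1 ≤ nk k},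
          padicHaar p (Metric.closedBall (x k) ((p:ℝ)^(-nk (k:ι)))) := measure_iUnion_le _
    _ = ∑' k : {k : ι // l + 1 ≤ nk k}, (p:ℝ≥0∞)^(-nk (k:ι)) := by
        exact tsum_congr fun k => by rw [padicHaar_closedBall_eq, padicHaar_ball]
    _ = ∑' q : Σ a : {a : ℤ // l + 1 ≤ a}, {k : ι // nk k = (a:ℤ)},
          (p:ℝ≥0∞)^(-((q.1:ℤ))) := by
        rw [← Equiv.tsum_eq (sigEquiv l nk) (fun q => (p:ℝ≥0∞)^(-((q.1:ℤ))))]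
        exact tsum_congr fun k => rfl
    _ = ∑' a : {a : ℤ // l + 1 ≤ a}, ∑' _ : {k : ι // nk k = (a:ℤ)},
          (p:ℝ≥0∞)^(-((a:ℤ))) := ENNReal.tsum_sigma' _
    _ = ∑' a : {a : ℤ // l + 1 ≤ a},
          ({k | nk k = (a : ℤ)}.encard : ℝ≥0∞) * (p : ℝ≥0∞) ^ (-(a : ℤ)) := by
        exact tsum_congr fun a => ENNReal.tsum_set_const _ _
end
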